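/- Let $\mu, \sigma$ be continuous on an open interval $\mathcal{I}$ with $\sigma^2 > 0$, let $r > 0$, let $S'(x) = \exp(-\int_{x_0}^x 2\mu/\sigma^2)$, and let $\phi_r, \psi_r \in C^2(\mathcal{I})$ be strictly positive solutions of $\frac{1}{2}\sigma^2 u'' + \mu u' - r u = 0$ with $\psi_r$ strictly increasing and $\phi_r$ strictly decreasing. For $H \in C^2(\mathcal{I})$ define $\hat{H}(y) = (H/\phi_r)(F_r^{-1}(y))$ with $F_r = \psi_r/\phi_r$, and set $h = \frac{1}{2}\sigma^2 H'' + \mu H' - rH$. Then for $y = F_r(x)$, $\hat{H}''(y) = \frac{2\,\phi_r(x)^3}{W^2\, \sigma^2(x)\, S'(x)^2}\, h(x)$, where $W$ is the (constant, positive) Wronskian. In particular $\hat{H}$ is strictly convex at $y$ if and only if $h(x) > 0$. -/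

import Mathlib

open Set Filter MeasureTheory intervalIntegral

theorem stmt10 (a b x0 r : ℝ) (μ σ ψ φ H Hhat : ℝ → ℝ) (W : ℝ)
    (hab : a < b) (hx0 : x0 ∈ Set.Ioo a b) (hr : 0 < r)
    (hμ : ContinuousOn μ (Set.Ioo a b)) (hσ : ContinuousOn σ (Set.Ioo a b))
    (hσpos : ∀ x ∈ Set.Ioo a b, 0 < (σ x) ^ 2)
    (hψ : ContDiffOn ℝ 2 ψ (Set.Ioo a b)) (hφ : ContDiffOn ℝ 2 φ (Set.Ioo a b))
    (hψpos : ∀ x ∈ Set.Ioo a b, 0 < ψ x) (hφpos : ∀ x ∈ Set.Ioo a b, 0 < φ x)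
    (hψmono : StrictMonoOn ψ (Set.Ioo a b))
    (hφanti : StrictAntiOn φ (Set.Ioo a b))
    (hψode : ∀ x ∈ Set.Ioo a b,
      (1 / 2) * (σ x) ^ 2 * deriv (deriv ψ) x + μ x * deriv ψ x - r * ψ x = 0)
    (hφode : ∀ x ∈ Set.Ioo a b,
      (1 / 2) * (σ x) ^ 2 * deriv (deriv φ) x + μ x * deriv φ x - r * φ x = 0)
    (hH : ContDiffOn ℝ 2 H (Set.Ioo a b))
    (hHhatC2 : ContDiffOn ℝ 2 Hhat (Set.Ioi 0))
    (hHhat : ∀ x ∈ Set.Ioo a b, Hhat (ψ x / φ x) = H x / φ x)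
    (hW : 0 < W)
    (hWr : ∀ x ∈ Set.Ioo a b,
      (deriv ψ x * φ x - deriv φ x * ψ x)
          / Real.exp (-∫ t in x0..x, 2 * μ t / (σ t) ^ 2) = W) :
    ∀ x ∈ Set.Ioo a b,
      deriv (deriv Hhat) (ψ x / φ x)
          = (2 * (φ x) ^ 3)
              / (W ^ 2 * (σ x) ^ 2 * (Real.exp (-∫ t in x0..x, 2 * μ t / (σ t) ^ 2)) ^ 2)
            * ((1 / 2) * (σ x) ^ 2 * deriv (deriv H) x + μ x * deriv H x - r * H x)
        ∧ (0 < deriv (deriv Hhat) (ψ x / φ x) ↔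
            0 < (1 / 2) * (σ x) ^ 2 * deriv (deriv H) x + μ x * deriv H x - r * H x) := by
  have hopen : IsOpen (Set.Ioo a b) := isOpen_Ioo
  set I := Set.Ioo a b with hI
  set f : ℝ → ℝ := fun t => 2 * μ t / (σ t) ^ 2 with hfdef
  set S : ℝ → ℝ := fun y => Real.exp (-∫ t in x0..y, f t) with hSdef
  have hSpos : ∀ y, 0 < S y := fun y => Real.exp_pos _
  have hfcont : ContinuousOn f I := by
    apply ContinuousOn.div (continuousOn_const.mul hμ) (hσ.pow 2)
    exact fun y hy => (hσpos y hy).ne'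
  -- derivative of S
  have hSderiv : ∀ y ∈ I, HasDerivAt S (-(f y) * S y) y := by
    intro y hy
    have hint : IntervalIntegrable f volume x0 y :=
      (hfcont.mono (Set.ordConnected_Ioo.uIcc_subset hx0 hy)).intervalIntegrable
    have hmeas : StronglyMeasurableAtFilter f (nhds y) volume :=
      hfcont.stronglyMeasurableAtFilter hopen y hy
    have hca : ContinuousAt f y := hfcont.continuousAt (hopen.mem_nhds hy)
    have h1 : HasDerivAt (fun u => ∫ t in x0..u, f t) (f y) y :=
      integral_hasDerivAt_right hint hmeas hca
    have h2 := (h1.neg).exp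
    convert h2 using 1
    show -f y * Real.exp (-∫ t in x0..y, f t) = _
    simp only [Pi.neg_apply]; ring
    rfl
  -- derivatives from C2
  have hD : ∀ u : ℝ → ℝ, ∀ s : Set ℝ, IsOpen s → ContDiffOn ℝ 2 u s → ∀ y ∈ s,
      HasDerivAt u (deriv u y) y ∧ HasDerivAt (deriv u) (deriv (deriv u) y) y := by
    intro u s hs hu y hy
    constructor
    · exact ((hu.differentiableOn (by norm_num)).differentiableAt (hs.mem_nhds hy)).hasDerivAt
    · have h1 : ContDiffOn ℝ 1 (deriv u) s := hu.deriv_of_isOpen hs (by norm_num)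
      exact ((h1.differentiableOn (by norm_num)).differentiableAt (hs.mem_nhds hy)).hasDerivAt
  have hφd := fun y hy => (hD φ I hopen hφ y hy).1
  have hφd2 := fun y hy => (hD φ I hopen hφ y hy).2
  have hψd := fun y hy => (hD ψ I hopen hψ y hy).1
  have hHd := fun y hy => (hD H I hopen hH y hy).1
  have hHd2 := fun y hy => (hD H I hopen hH y hy).2
  have hHh1 := fun z hz => (hD Hhat (Set.Ioi 0) isOpen_Ioi hHhatC2 z hz).1
  have hHh2 := fun z hz => (hD Hhat (Set.Ioi 0) isOpen_Ioi hHhatC2 z hz).2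
  have hφne : ∀ y ∈ I, φ y ≠ 0 := fun y hy => (hφpos y hy).ne'
  have hWS : ∀ y ∈ I, deriv ψ y * φ y - deriv φ y * ψ y = W * S y := by
    intro y hy
    have := hWr y hy
    field_simp [hSdef] at this ⊢
    linarith [this]
  -- F and its derivative
  have hFpos : ∀ y ∈ I, (0:ℝ) < ψ y / φ y := fun y hy =>
    div_pos (hψpos y hy) (hφpos y hy)
  have hFd : ∀ y ∈ I, HasDerivAt (fun t => ψ t / φ t) (W * S y / (φ y) ^ 2) y := by
    intro y hy
    have h := (hψd y hy).fun_div (hφd y hy) (hφne y hy)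
    refine h.congr_deriv ?_
    rw [← hWS y hy]; ring
  -- first derivative identity
  have hB : ∀ y ∈ I, deriv Hhat (ψ y / φ y)
      = (deriv H y * φ y - deriv φ y * H y) / (W * S y) := by
    intro y hy
    have hcomp : HasDerivAt (fun t => Hhat (ψ t / φ t))
        (deriv Hhat (ψ y / φ y) * (W * S y / (φ y) ^ 2)) y :=
      (hHh1 _ (hFpos y hy)).comp y (hFd y hy)
    have heq : (fun t => Hhat (ψ t / φ t)) =ᶠ[nhds y] (fun t => H t / φ t) := by
      filter_upwards [hopen.mem_nhds hy] with t ht using hHhat t ht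
    have hG : HasDerivAt (fun t => H t / φ t)
        ((deriv H y * φ y - H y * deriv φ y) / (φ y) ^ 2) y :=
      (hHd y hy).div (hφd y hy) (hφne y hy)
    have hcomp' : HasDerivAt (fun t => H t / φ t)
        (deriv Hhat (ψ y / φ y) * (W * S y / (φ y) ^ 2)) y :=
      hcomp.congr_of_eventuallyEq heq.symm
    have huniq := hG.unique hcomp'
    have hWne : W ≠ 0 := hW.ne'
    have hSne : S y ≠ 0 := (hSpos y).ne'
    field_simp [hφne y hy] at huniq
    field_simp [hWne, hSne]
    linarith [huniq]
  -- second derivative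
  intro x hx
  have hFpx := hFpos x hx
  have hSne : S x ≠ 0 := (hSpos x).ne'
  have hWne : W ≠ 0 := hW.ne'
  have hσne : (σ x) ^ 2 ≠ 0 := (hσpos x hx).ne'
  have hWSne : W * S x ≠ 0 := mul_ne_zero hWne hSne
  have hnum : HasDerivAt (fun t => deriv H t * φ t - deriv φ t * H t)
      (deriv (deriv H) x * φ x + deriv H x * deriv φ x
        - (deriv (deriv φ) x * H x + deriv φ x * deriv H x)) x :=
    ((hHd2 x hx).mul (hφd x hx)).sub ((hφd2 x hx).mul (hHd x hx))
  have hden : HasDerivAt (fun t => W * S t) (W * (-(f x) * S x)) x :=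
    (hSderiv x hx).const_mul W
  have hgd := hnum.div hden hWSne
  have hchain : HasDerivAt (fun t => deriv Hhat (ψ t / φ t))
      (deriv (deriv Hhat) (ψ x / φ x) * (W * S x / (φ x) ^ 2)) x :=
    by have := (hHh2 (ψ x / φ x) hFpx).comp x (hFd x hx); exact this
  have heq2 : (fun t => deriv Hhat (ψ t / φ t))
      =ᶠ[nhds x] (fun t => (deriv H t * φ t - deriv φ t * H t) / (W * S t)) := by
    filter_upwards [hopen.mem_nhds hx] with t ht using hB t ht
  have hgd' := hchain.congr_of_eventuallyEq heq2.symm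
  have hE := hgd.unique hgd'
  have hode := hφode x hx
  have hSgoal : Real.exp (-∫ t in x0..x, 2 * μ t / (σ t) ^ 2) = S x := rfl
  have hkey : deriv (deriv Hhat) (ψ x / φ x)
      = (2 * (φ x) ^ 3) / (W ^ 2 * (σ x) ^ 2 * (S x) ^ 2)
        * ((1 / 2) * (σ x) ^ 2 * deriv (deriv H) x + μ x * deriv H x - r * H x) := by
    have hc : W * S x / (φ x) ^ 2 ≠ 0 :=
      div_ne_zero hWSne (pow_ne_zero 2 (hφne x hx))
    apply mul_right_cancel₀ hc
    rw [← hE]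
    have hfx : f x = 2 * μ x / (σ x) ^ 2 := rfl
    rw [hfx]
    have hσne' : σ x ≠ 0 := fun h => hσne (by rw [h]; ring)
    field_simp [hWne, hSne, hσne, hσne', hφne x hx]
    linear_combination (-2 * H x) * hode
  refine ⟨by rw [hSgoal, hkey], ?_⟩
  rw [hkey]
  have hcpos : 0 < (2 * (φ x) ^ 3) / (W ^ 2 * (σ x) ^ 2 * (S x) ^ 2) := by
    have h1 := hφpos x hx; have h2 := hσpos x hx
    positivity
  exact mul_pos_iff_of_pos_left hcpos
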